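/- arXiv:2407.02671 — 2 statements merged into one kernel-verified Lean document; each statement's English description precedes it below -/
import Mathlib

section
/- Let M₁, M₀ be {0,1}-valued and Y_{1,1}, Y_{1,0}, Y_{0,1}, Y_{0,0} integrable random variables. Let G₁, G₀ have the respective distributions of M₁, M₀ and be independent of the Y potential outcomes. Define Y_{a,X} := Y_{a,1}·X + Y_{a,0}·(1−X). Then E[Y_{1,M₁} − Y_{0,M₀}] − E[Y_{1,G₁} − Y_{0,G₀}] = Cov(M₁, Y_{1,1} − Y_{1,0}) − Cov(M₀, Y_{0,1} − Y_{0,0}). -/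
/-!
Writing `Y₁ X + Y₀ (1 - X) = Y₀ + X (Y₁ - Y₀)`, each arm's contribution to `TE - TE^R` is
`E[M (Y₁ - Y₀)] - E[G (Y₁ - Y₀)]`. Independence of `G` from the outcomes factors the second
term as `E[G] E[Y₁ - Y₀]`, and `E[G] = E[M]` since they have the same law.

Nothing forces `G` to be measurable. If it is not, integrability of `G (Y₁ - Y₀)` together
with independence (which then speaks about outer measures) forces `Y₁ - Y₀ = 0` a.e.: on
`B = {Y₁ ≠ Y₀}` the set `{G = 1} ∩ B = {G (Y₁ - Y₀) ≠ 0}` is null-measurable, so splitting `B`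
along it and factoring both pieces by independence makes the outer measure additive on `{G = 1}`
and its complement, which forces `{G = 1}` to be null-measurable.
-/

open MeasureTheory ProbabilityTheory

namespace MeasureTheory

variable {Ω : Type*} [MeasurableSpace Ω] {μ : Measure Ω}

theorem nullMeasurableSet_of_measure_add_measure_compl [IsFiniteMeasure μ] {s : Set Ω}
    (h : μ s + μ sᶜ = μ Set.univ) : NullMeasurableSet s μ := by
  set T := toMeasurable μ s
  set T' := toMeasurable μ sᶜ
  have hcover : T ∪ T' = Set.univ :=
    Set.eq_univ_of_forall fun ω => (em (ω ∈ s)).imp (subset_toMeasurable μ s ·)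
      (subset_toMeasurable μ sᶜ ·)
  have hoverlap : μ (T ∩ T') = 0 := by
    have := measure_union_add_inter (μ := μ) T (measurableSet_toMeasurable μ sᶜ)
    rw [hcover, measure_toMeasurable, measure_toMeasurable, h] at this
    exact (ENNReal.add_right_inj (measure_ne_top μ Set.univ)).mp (this.trans (add_zero _).symm)
  refine (measurableSet_toMeasurable μ s).nullMeasurableSet.congr (ae_eq_set.mpr ⟨?_, ?_⟩).symm
  · simp [Set.sdiff_eq_empty.mpr (subset_toMeasurable μ s)]
  · exact measure_mono_null (fun ω hω => (⟨hω.1, subset_toMeasurable μ sᶜ hω.2⟩ : ω ∈ T ∩ T'))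
      hoverlap

theorem integral_id_map (X : Ω → ℝ) : ∫ x, x ∂μ.map X = ∫ ω, X ω ∂μ := by
  by_cases hX : AEMeasurable X μ
  · exact integral_map hX aestronglyMeasurable_id
  · rw [Measure.map_of_not_aemeasurable hX, integral_zero_measure,
      integral_undef fun hint => hX hint.aemeasurable]

theorem integral_eq_of_map_eq {X X' : Ω → ℝ} (h : μ.map X = μ.map X') :
    ∫ ω, X ω ∂μ = ∫ ω, X' ω ∂μ := by
  rw [← integral_id_map, h, integral_id_map]

theorem integral_mix_eq {X Y₁ Y₀ : Ω → ℝ} (hY₀ : Integrable Y₀ μ)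
    (hXY : Integrable (fun ω => X ω * (Y₁ ω - Y₀ ω)) μ) :
    ∫ ω, (Y₁ ω * X ω + Y₀ ω * (1 - X ω)) ∂μ
      = ∫ ω, Y₀ ω ∂μ + ∫ ω, X ω * (Y₁ ω - Y₀ ω) ∂μ := by
  rw [← integral_add hY₀ hXY]
  exact integral_congr_ae (Filter.Eventually.of_forall fun ω => by ring)

end MeasureTheory

namespace ProbabilityTheory

variable {Ω : Type*} [MeasurableSpace Ω] {μ : Measure Ω} [IsProbabilityMeasure μ]

theorem IndepFun.aemeasurable_of_aemeasurable_mul {G D : Ω → ℝ}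
    (hG : ∀ ω, G ω = 0 ∨ G ω = 1) (hind : G ⟂ᵢ[μ] D) (hGD : AEMeasurable (G * D) μ)
    (hD : ¬ D =ᵐ[μ] 0) : AEMeasurable G μ := by
  set A := G ⁻¹' {1}
  set B := D ⁻¹' {0}ᶜ
  have hG0 : G ⁻¹' {0} = Aᶜ := by
    ext ω; rcases hG ω with h | h <;> simp [A, h]
  have hAB : NullMeasurableSet (A ∩ B) μ := by
    have : A ∩ B = (G * D) ⁻¹' {0}ᶜ := by
      ext ω; rcases hG ω with h | h <;> simp [A, B, h]
    exact this ▸ hGD.nullMeasurableSet_preimage (measurableSet_singleton 0).compl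
  have hB : μ B ≠ 0 := fun h => hD (ae_iff.mpr (by simpa [B, Set.preimage, Set.compl_ofPred] using h))
  have hsplit : μ (A ∩ B) + μ (Aᶜ ∩ B) = μ B := by
    rw [← measure_union₀' hAB ?_, ← Set.union_inter_distrib_right, Set.union_compl_self,
      Set.univ_inter]
    exact (disjoint_compl_right.mono Set.inter_subset_left Set.inter_subset_left).aedisjoint
  have hindA := hind.measure_inter_preimage_eq_mul {1} {0}ᶜ (measurableSet_singleton 1)
    (measurableSet_singleton 0).compl
  have hindAc := hind.measure_inter_preimage_eq_mul {0} {0}ᶜ (measurableSet_singleton 0)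
    (measurableSet_singleton 0).compl
  rw [hG0] at hindAc
  change μ (A ∩ B) = μ A * μ B at hindA
  change μ (Aᶜ ∩ B) = μ Aᶜ * μ B at hindAc
  have hA : μ A + μ Aᶜ = μ Set.univ := by
    rw [measure_univ]
    refine (ENNReal.mul_left_inj hB (measure_ne_top μ B)).mp ?_
    rw [add_mul, one_mul, ← hindA, ← hindAc, hsplit]
  have hGA : G = A.indicator 1 := by
    ext ω; rcases hG ω with h | h <;> simp [A, h]
  exact hGA ▸ aemeasurable_const.indicator₀ (nullMeasurableSet_of_measure_add_measure_compl hA)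

theorem IndepFun.integral_mul_eq_mul_integral_of_zero_or_one {G D : Ω → ℝ}
    (hG : ∀ ω, G ω = 0 ∨ G ω = 1) (hind : G ⟂ᵢ[μ] D) (hD : Integrable D μ)
    (hGD : Integrable (fun ω => G ω * D ω) μ) :
    ∫ ω, G ω * D ω ∂μ = (∫ ω, G ω ∂μ) * ∫ ω, D ω ∂μ := by
  by_cases hGm : AEMeasurable G μ
  · exact hind.integral_fun_mul_eq_mul_integral hGm.aestronglyMeasurable
      hD.aestronglyMeasurable
  · have hD0 : D =ᵐ[μ] 0 := by
      by_contra hD0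
      exact hGm (hind.aemeasurable_of_aemeasurable_mul hG hGD.aemeasurable hD0)
    have hGD0 : (fun ω => G ω * D ω) =ᵐ[μ] 0 := by
      filter_upwards [hD0] with ω h
      simp [h]
    rw [integral_eq_zero_of_ae hGD0, integral_eq_zero_of_ae hD0, mul_zero]

theorem integral_mix_sub_integral_mix_eq_cov {M G Y₁ Y₀ : Ω → ℝ}
    (hG : ∀ ω, G ω = 0 ∨ G ω = 1) (hdist : μ.map G = μ.map M)
    (hind : G ⟂ᵢ[μ] fun ω => Y₁ ω - Y₀ ω) (hY₁ : Integrable Y₁ μ) (hY₀ : Integrable Y₀ μ)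
    (hIG : Integrable (fun ω => Y₁ ω * G ω + Y₀ ω * (1 - G ω)) μ)
    (hcov : Integrable (fun ω => M ω * (Y₁ ω - Y₀ ω)) μ) :
    ∫ ω, (Y₁ ω * M ω + Y₀ ω * (1 - M ω)) ∂μ - ∫ ω, (Y₁ ω * G ω + Y₀ ω * (1 - G ω)) ∂μ
      = ∫ ω, M ω * (Y₁ ω - Y₀ ω) ∂μ - (∫ ω, M ω ∂μ) * ∫ ω, (Y₁ ω - Y₀ ω) ∂μ := by
  have hGD : Integrable (fun ω => G ω * (Y₁ ω - Y₀ ω)) μ :=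
    (hIG.sub hY₀).congr (Filter.Eventually.of_forall fun ω => by simp only [Pi.sub_apply]; ring)
  rw [integral_mix_eq hY₀ hcov, integral_mix_eq hY₀ hGD,
    hind.integral_mul_eq_mul_integral_of_zero_or_one hG (hY₁.sub hY₀) hGD,
    integral_eq_of_map_eq hdist]
  ring

end ProbabilityTheory

theorem stmt3_general {Ω : Type*} [MeasurableSpace Ω] (μ : Measure Ω) [IsProbabilityMeasure μ]
    (M1 M0 G1 G0 Y11 Y10 Y01 Y00 : Ω → ℝ)
    (hG1 : ∀ ω, G1 ω = 0 ∨ G1 ω = 1) (hG0 : ∀ ω, G0 ω = 0 ∨ G0 ω = 1)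
    (hdist1 : Measure.map G1 μ = Measure.map M1 μ)
    (hdist0 : Measure.map G0 μ = Measure.map M0 μ)
    (hindep : IndepFun (fun ω => (G1 ω, G0 ω)) (fun ω => (Y11 ω, Y10 ω, Y01 ω, Y00 ω)) μ)
    (hY11 : Integrable Y11 μ) (hY10 : Integrable Y10 μ)
    (hY01 : Integrable Y01 μ) (hY00 : Integrable Y00 μ)
    (hI1G : Integrable (fun ω => Y11 ω * G1 ω + Y10 ω * (1 - G1 ω)) μ)
    (hI0G : Integrable (fun ω => Y01 ω * G0 ω + Y00 ω * (1 - G0 ω)) μ)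
    (hcov1 : Integrable (fun ω => M1 ω * (Y11 ω - Y10 ω)) μ)
    (hcov0 : Integrable (fun ω => M0 ω * (Y01 ω - Y00 ω)) μ) :
    ((∫ ω, (Y11 ω * M1 ω + Y10 ω * (1 - M1 ω)) ∂μ)
        - ∫ ω, (Y01 ω * M0 ω + Y00 ω * (1 - M0 ω)) ∂μ)
      - ((∫ ω, (Y11 ω * G1 ω + Y10 ω * (1 - G1 ω)) ∂μ)
        - ∫ ω, (Y01 ω * G0 ω + Y00 ω * (1 - G0 ω)) ∂μ)
    = ((∫ ω, M1 ω * (Y11 ω - Y10 ω) ∂μ)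
        - (∫ ω, M1 ω ∂μ) * ∫ ω, (Y11 ω - Y10 ω) ∂μ)
      - ((∫ ω, M0 ω * (Y01 ω - Y00 ω) ∂μ)
        - (∫ ω, M0 ω ∂μ) * ∫ ω, (Y01 ω - Y00 ω) ∂μ) := by
  have hind1 : G1 ⟂ᵢ[μ] fun ω => Y11 ω - Y10 ω :=
    hindep.comp measurable_fst (measurable_fst.sub (measurable_fst.comp measurable_snd))
  have hind0 : G0 ⟂ᵢ[μ] fun ω => Y01 ω - Y00 ω :=
    hindep.comp measurable_snd ((measurable_fst.comp (measurable_snd.comp measurable_snd)).sub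
      (measurable_snd.comp (measurable_snd.comp measurable_snd)))
  have arm1 := integral_mix_sub_integral_mix_eq_cov hG1 hdist1 hind1 hY11 hY10 hI1G hcov1
  have arm0 := integral_mix_sub_integral_mix_eq_cov hG0 hdist0 hind0 hY01 hY00 hI0G hcov0
  linarith

/-- TE − TE^R = Cov(M₁, Y₁₁ − Y₁₀) − Cov(M₀, Y₀₁ − Y₀₀). -/
theorem stmt3 {Ω : Type*} [MeasurableSpace Ω] (μ : Measure Ω) [IsProbabilityMeasure μ]
    (M1 M0 G1 G0 Y11 Y10 Y01 Y00 : Ω → ℝ)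
    (hM1 : ∀ ω, M1 ω = 0 ∨ M1 ω = 1) (hM0 : ∀ ω, M0 ω = 0 ∨ M0 ω = 1)
    (hG1 : ∀ ω, G1 ω = 0 ∨ G1 ω = 1) (hG0 : ∀ ω, G0 ω = 0 ∨ G0 ω = 1)
    (hdist1 : Measure.map G1 μ = Measure.map M1 μ)
    (hdist0 : Measure.map G0 μ = Measure.map M0 μ)
    (hindep : IndepFun (fun ω => (G1 ω, G0 ω)) (fun ω => (Y11 ω, Y10 ω, Y01 ω, Y00 ω)) μ)
    (hY11 : Integrable Y11 μ) (hY10 : Integrable Y10 μ)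
    (hY01 : Integrable Y01 μ) (hY00 : Integrable Y00 μ)
    (hI1M : Integrable (fun ω => Y11 ω * M1 ω + Y10 ω * (1 - M1 ω)) μ)
    (hI0M : Integrable (fun ω => Y01 ω * M0 ω + Y00 ω * (1 - M0 ω)) μ)
    (hI1G : Integrable (fun ω => Y11 ω * G1 ω + Y10 ω * (1 - G1 ω)) μ)
    (hI0G : Integrable (fun ω => Y01 ω * G0 ω + Y00 ω * (1 - G0 ω)) μ)
    (hcov1 : Integrable (fun ω => M1 ω * (Y11 ω - Y10 ω)) μ)
    (hcov0 : Integrable (fun ω => M0 ω * (Y01 ω - Y00 ω)) μ) :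
    ((∫ ω, (Y11 ω * M1 ω + Y10 ω * (1 - M1 ω)) ∂μ)
        - ∫ ω, (Y01 ω * M0 ω + Y00 ω * (1 - M0 ω)) ∂μ)
      - ((∫ ω, (Y11 ω * G1 ω + Y10 ω * (1 - G1 ω)) ∂μ)
        - ∫ ω, (Y01 ω * G0 ω + Y00 ω * (1 - G0 ω)) ∂μ)
    = ((∫ ω, M1 ω * (Y11 ω - Y10 ω) ∂μ)
        - (∫ ω, M1 ω ∂μ) * ∫ ω, (Y11 ω - Y10 ω) ∂μ)
      - ((∫ ω, M0 ω * (Y01 ω - Y00 ω) ∂μ)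
        - (∫ ω, M0 ω ∂μ) * ∫ ω, (Y01 ω - Y00 ω) ∂μ) :=
  stmt3_general μ M1 M0 G1 G0 Y11 Y10 Y01 Y00 hG1 hG0 hdist1 hdist0 hindep hY11 hY10 hY01 hY00 hI1G
    hI0G hcov1 hcov0
end

section
/- Let C be a random variable, M₀ a random variable with finite support 𝓜, and {Y_{1,m}}_{m∈𝓜}, {Y_{0,m}}_{m∈𝓜} integrable. Then E[Y_{1,M₀} − Y_{0,M₀}] − Σ_{m∈𝓜} E[ E[Y_{1,m}−Y_{0,m} | C] · E[𝟙(M₀=m) | C] ] = Σ_{m∈𝓜} E[ Cov(𝟙(M₀=m), Y_{1,m}−Y_{0,m} | C) ], where Y_{a,M₀} := Σ_{m∈𝓜} 𝟙(M₀=m)·Y_{a,m}. -/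
/-!
By the tower property, `E[Cov(f, g | C)] = E[f g] - E[E[f | C] E[g | C]]` whenever the product of
the conditional expectations is integrable. Taking `f = 𝟙(M₀ = m)` and `g = Y_{1,m} - Y_{0,m}`, the
product is integrable because `E[𝟙(M₀ = m) | C]` takes values in `[0, 1]`, and summing over `m`
recovers `Y_{1,M₀} - Y_{0,M₀}` inside the first expectation.
-/

open MeasureTheory

/-- The σ-algebra generated by the baseline covariate `C`. -/
def sigmaGen {Ω : Type*} (C : Ω → ℝ) : MeasurableSpace Ω :=
  MeasurableSpace.comap C inferInstance

/-- Conditional expectation given `C`: `E[f | C]`. -/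
noncomputable def condE {Ω : Type*} [MeasurableSpace Ω] (μ : Measure Ω) (C : Ω → ℝ)
    (f : Ω → ℝ) : Ω → ℝ :=
  μ[f | sigmaGen C]

/-- Conditional covariance given `C`: `Cov(f, g | C) = E[fg|C] − E[f|C]E[g|C]`. -/
noncomputable def condCov {Ω : Type*} [MeasurableSpace Ω] (μ : Measure Ω) (C : Ω → ℝ)
    (f g : Ω → ℝ) : Ω → ℝ :=
  fun ω => condE μ C (fun ω' => f ω' * g ω') ω - condE μ C f ω * condE μ C g ω

/-- Indicator `𝟙(X = m)` as a real-valued random variable. -/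
noncomputable def ind {Ω : Type*} (X : Ω → ℝ) (m : ℝ) : Ω → ℝ :=
  fun ω => if X ω = m then 1 else 0

section

variable {Ω : Type*}

lemma abs_ind_le_one (X : Ω → ℝ) (m : ℝ) (ω : Ω) : |ind X m ω| ≤ 1 := by
  unfold ind; split_ifs <;> simp

variable [mΩ : MeasurableSpace Ω] {μ : Measure Ω} {C : Ω → ℝ}

lemma sigmaGen_le (hC : Measurable C) : sigmaGen C ≤ mΩ :=
  hC.comap_le

lemma measurable_ind {X : Ω → ℝ} (hX : Measurable X) (m : ℝ) : Measurable (ind X m) :=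
  Measurable.ite (hX (measurableSet_singleton m)) measurable_const measurable_const

lemma integrable_ind_mul {X g : Ω → ℝ} (hX : Measurable X) (m : ℝ) (hg : Integrable g μ) :
    Integrable (fun ω => ind X m ω * g ω) μ :=
  hg.bdd_mul (measurable_ind hX m).aestronglyMeasurable (.of_forall (abs_ind_le_one X m))

lemma integrable_condE_mul_condE_of_ae_abs_le (hC : Measurable C) {f : Ω → ℝ} {R : ℝ}
    (hf : ∀ᵐ ω ∂μ, |f ω| ≤ R) (g : Ω → ℝ) :
    Integrable (fun ω => condE μ C f ω * condE μ C g ω) μ :=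
  integrable_condExp.bdd_mul
    (stronglyMeasurable_condExp.mono (sigmaGen_le hC)).aestronglyMeasurable
    (ae_bdd_abs_condExp_of_ae_bdd_abs hf)

lemma integral_condCov [IsFiniteMeasure μ] (hC : Measurable C) {f g : Ω → ℝ}
    (hfg : Integrable (fun ω => condE μ C f ω * condE μ C g ω) μ) :
    ∫ ω, condCov μ C f g ω ∂μ = ∫ ω, f ω * g ω ∂μ - ∫ ω, condE μ C f ω * condE μ C g ω ∂μ := by
  have h_tower : ∫ ω, condE μ C (fun ω' => f ω' * g ω') ω ∂μ = ∫ ω, f ω * g ω ∂μ :=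
    integral_condExp (sigmaGen_le hC)
  have h_int : Integrable (condE μ C fun ω' => f ω' * g ω') μ := integrable_condExp
  unfold condCov
  rw [integral_sub h_int hfg, h_tower]

end

theorem stmt8_general {Ω : Type*} [MeasurableSpace Ω] (μ : Measure Ω) [IsProbabilityMeasure μ]
    (C : Ω → ℝ) (hC : Measurable C)
    (𝓜 : Finset ℝ) (M0 : Ω → ℝ) (hM0meas : Measurable M0)
    (Y1 Y0 : ℝ → Ω → ℝ)
    (hY1 : ∀ m ∈ 𝓜, Integrable (Y1 m) μ) (hY0 : ∀ m ∈ 𝓜, Integrable (Y0 m) μ) :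
    (∫ ω, (∑ m ∈ 𝓜, ind M0 m ω * Y1 m ω - ∑ m ∈ 𝓜, ind M0 m ω * Y0 m ω) ∂μ)
      - ∑ m ∈ 𝓜, ∫ ω, (condE μ C (fun ω' => Y1 m ω' - Y0 m ω') ω
            * condE μ C (ind M0 m) ω) ∂μ
    = ∑ m ∈ 𝓜, ∫ ω, condCov μ C (ind M0 m) (fun ω' => Y1 m ω' - Y0 m ω') ω ∂μ := by
  have h_sum : (∫ ω, (∑ m ∈ 𝓜, ind M0 m ω * Y1 m ω - ∑ m ∈ 𝓜, ind M0 m ω * Y0 m ω) ∂μ)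
      = ∑ m ∈ 𝓜, ∫ ω, ind M0 m ω * (Y1 m ω - Y0 m ω) ∂μ := by
    rw [← integral_finsetSum 𝓜 fun m hm => integrable_ind_mul (g := fun ω => Y1 m ω - Y0 m ω)
      hM0meas m ((hY1 m hm).sub (hY0 m hm))]
    simp only [mul_sub, Finset.sum_sub_distrib]
  rw [h_sum, ← Finset.sum_sub_distrib]
  refine Finset.sum_congr rfl fun m _ => ?_
  rw [integral_condCov hC <| integrable_condE_mul_condE_of_ae_abs_le (μ := μ) hC
    (.of_forall (abs_ind_le_one M0 m)) _]
  simp only [mul_comm]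

/-- Proposition 2, NDE part, finite mediator support:
NDE − NDE^R = Σ_m E[Cov(𝟙(M₀=m), Y_{1,m}−Y_{0,m} | C)]. -/
theorem stmt8 {Ω : Type*} [MeasurableSpace Ω] (μ : Measure Ω) [IsProbabilityMeasure μ]
    (C : Ω → ℝ) (hC : Measurable C)
    (𝓜 : Finset ℝ) (M0 : Ω → ℝ) (hM0 : ∀ ω, M0 ω ∈ 𝓜) (hM0meas : Measurable M0)
    (Y1 Y0 : ℝ → Ω → ℝ)
    (hY1 : ∀ m ∈ 𝓜, Integrable (Y1 m) μ) (hY0 : ∀ m ∈ 𝓜, Integrable (Y0 m) μ) :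
    (∫ ω, (∑ m ∈ 𝓜, ind M0 m ω * Y1 m ω - ∑ m ∈ 𝓜, ind M0 m ω * Y0 m ω) ∂μ)
      - ∑ m ∈ 𝓜, ∫ ω, (condE μ C (fun ω' => Y1 m ω' - Y0 m ω') ω
            * condE μ C (ind M0 m) ω) ∂μ
    = ∑ m ∈ 𝓜, ∫ ω, condCov μ C (ind M0 m) (fun ω' => Y1 m ω' - Y0 m ω') ω ∂μ :=
  stmt8_general μ C hC 𝓜 M0 hM0meas Y1 Y0 hY1 hY0
end
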